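/- For any grid function v ∈ V_h^0, the discrete inner product satisfies (H_h v, Λ_h v) ≤ 0. -/

import Mathlib

/-!
Along each grid line the compact operator acts as `a + δ²a/12` (in units of `h²`), so the
one-dimensional form is `Σ a δ²a + (1/12) Σ (δ²a)²`. Summation by parts turns the first sum
into `-Σ (Δa)²` when `a` vanishes at both ends, while `δ²a` is a difference of two consecutive
`Δa`, so the second sum is at most `4 Σ (Δa)²`; the total is at most `-(2/3) Σ (Δa)² ≤ 0`.
In two dimensions `H_y` commutes with `δ_x²` and `H_x` with `δ_y²`, so `(H_h v, Λ_h v)` splits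
into such line sums for `H_y v` along the rows and for `H_x v` along the columns.
-/

open Finset

noncomputable section

/-- A grid function on the `(M_x+1) × (M_y+1)` grid, represented as a total function
(only the values at indices `0 ≤ i ≤ M_x`, `0 ≤ j ≤ M_y` are relevant). -/
abbrev GridFn : Type := ℕ → ℕ → ℝ

/-- Spatial stepsize `h_x = 1/M_x`. -/
def hx (Mx : ℕ) : ℝ := ((Mx : ℝ))⁻¹

/-- Spatial stepsize `h_y = 1/M_y`. -/
def hy (My : ℕ) : ℝ := ((My : ℝ))⁻¹

/-- Second-order difference in the x-direction:
`δ_x² v_{i,j} = (v_{i+1,j} − 2v_{i,j} + v_{i−1,j})/h_x²` (used for `1 ≤ i ≤ M_x−1`). -/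
def dxx (Mx : ℕ) (v : GridFn) : GridFn := fun i j =>
  (v (i + 1) j - 2 * v i j + v (i - 1) j) / (hx Mx) ^ 2

/-- Second-order difference in the y-direction. -/
def dyy (My : ℕ) (v : GridFn) : GridFn := fun i j =>
  (v i (j + 1) - 2 * v i j + v i (j - 1)) / (hy My) ^ 2

/-- Compact operator `H_x`: `H_x v_{i,j} = v_{i,j} + (h_x²/12) δ_x² v_{i,j}` for
`1 ≤ i ≤ M_x−1`, and `H_x v_{i,j} = v_{i,j}` for `i ∈ {0, M_x}`. -/
def Hcx (Mx : ℕ) (v : GridFn) : GridFn := fun i j =>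
  if 1 ≤ i ∧ i ≤ Mx - 1 then v i j + (hx Mx) ^ 2 / 12 * dxx Mx v i j else v i j

/-- Compact operator `H_y`. -/
def Hcy (My : ℕ) (v : GridFn) : GridFn := fun i j =>
  if 1 ≤ j ∧ j ≤ My - 1 then v i j + (hy My) ^ 2 / 12 * dyy My v i j else v i j

/-- Compact operator `H_h = H_x H_y`. -/
def Hch (Mx My : ℕ) (v : GridFn) : GridFn := Hcx Mx (Hcy My v)

/-- `Λ_h v = H_y(δ_x² v) + H_x(δ_y² v)` (at interior indices). -/
def Lamh (Mx My : ℕ) (v : GridFn) : GridFn := fun i j =>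
  Hcy My (dxx Mx v) i j + Hcx Mx (dyy My v) i j

/-- Discrete L² inner product
`(v,w) = h_x h_y Σ_{i=1}^{M_x−1} Σ_{j=1}^{M_y−1} v_{i,j} w_{i,j}`. -/
def innp (Mx My : ℕ) (v w : GridFn) : ℝ :=
  hx Mx * hy My * ∑ i ∈ Icc 1 (Mx - 1), ∑ j ∈ Icc 1 (My - 1), v i j * w i j

/-- Discrete L² norm `‖v‖ = (v,v)^{1/2}`. -/
def nrm (Mx My : ℕ) (v : GridFn) : ℝ := Real.sqrt (innp Mx My v v)

/-- Discrete maximum norm `‖v‖_∞ = max_{1≤i≤M_x−1, 1≤j≤M_y−1} |v_{i,j}|`. -/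
def nrmInf (Mx My : ℕ) (v : GridFn) : ℝ :=
  ((Icc 1 (Mx - 1)) ×ˢ (Icc 1 (My - 1))).fold max 0 fun p => |v p.1 p.2|

/-- `‖δ_x v‖_x² = h_x h_y Σ_{i=1}^{M_x} Σ_{j=1}^{M_y−1} (δ_x v_{i−1/2,j})²`. -/
def nrmX2 (Mx My : ℕ) (v : GridFn) : ℝ :=
  hx Mx * hy My * ∑ i ∈ Icc 1 Mx, ∑ j ∈ Icc 1 (My - 1),
    ((v i j - v (i - 1) j) / hx Mx) ^ 2

/-- `‖δ_y v‖_y² = h_x h_y Σ_{i=1}^{M_x−1} Σ_{j=1}^{M_y} (δ_y v_{i,j−1/2})²`. -/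
def nrmY2 (Mx My : ℕ) (v : GridFn) : ℝ :=
  hx Mx * hy My * ∑ i ∈ Icc 1 (Mx - 1), ∑ j ∈ Icc 1 My,
    ((v i j - v i (j - 1)) / hy My) ^ 2

/-- Membership in `V_h^0`: a grid function vanishing on the boundary of the grid. -/
def BZero (Mx My : ℕ) (v : GridFn) : Prop :=
  ∀ i ≤ Mx, ∀ j ≤ My, (i = 0 ∨ i = Mx ∨ j = 0 ∨ j = My) → v i j = 0

/-- Interior grid indices: `1 ≤ i ≤ M_x−1`, `1 ≤ j ≤ M_y−1`. -/
def interiorIdx (Mx My i j : ℕ) : Prop :=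
  1 ≤ i ∧ i ≤ Mx - 1 ∧ 1 ≤ j ∧ j ≤ My - 1

/-- Time average `w̄^{n−1/2} = (w^n + w^{n−1})/2` of a sequence of grid functions. -/
def tbar (u : ℕ → GridFn) (n : ℕ) : GridFn := fun i j => (u n i j + u (n - 1) i j) / 2

/-- Time difference `δ_t w^{n−1/2} = (w^n − w^{n−1})/τ` of a sequence of grid functions. -/
def tdiff (τ : ℝ) (u : ℕ → GridFn) (n : ℕ) : GridFn := fun i j =>
  (u n i j - u (n - 1) i j) / τ

/-- Extrapolation `l^{*,1} = l⁰`, `l^{*,n} = (3 l^{n−1} − l^{n−2})/2` for `n ≥ 2`. -/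
def extrap (u : ℕ → GridFn) (n : ℕ) : GridFn :=
  if n = 1 then u 0 else fun i j => (3 * u (n - 1) i j - u (n - 2) i j) / 2

def secondDiff (a : ℕ → ℝ) (k : ℕ) : ℝ := a (k + 1) - 2 * a k + a (k - 1)

section OneDimensional

variable (a : ℕ → ℝ) (N : ℕ)

theorem sum_range_mul_secondDiff (hN : a N = 0) :
    ∑ k ∈ range N, a k * secondDiff a k = -∑ k ∈ range (N + 1), (a k - a (k - 1)) ^ 2 := by
  -- `f 0 = 0`, and `a N = 0` makes `f N = -(a N - a (N - 1)) ^ 2` the missing last square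
  set f : ℕ → ℝ := fun k => a (k - 1) * a k - a (k - 1) ^ 2
  have hterm : ∀ k, a k * secondDiff a k = (f (k + 1) - f k) - (a k - a (k - 1)) ^ 2 := by
    intro k
    simp only [f, secondDiff, Nat.add_sub_cancel]
    ring
  rw [sum_congr rfl fun k _ => hterm k, sum_sub_distrib, sum_range_sub, sum_range_succ]
  simp only [f, hN, Nat.zero_sub]
  ring

theorem sum_range_sq_sub_le (B : ℕ → ℝ) :
    ∑ k ∈ range N, (B (k + 1) - B k) ^ 2 ≤ 4 * ∑ k ∈ range (N + 1), B k ^ 2 := by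
  have hpoint : ∀ k ∈ range N, (B (k + 1) - B k) ^ 2 ≤ 2 * B (k + 1) ^ 2 + 2 * B k ^ 2 :=
    fun k _ => by nlinarith [sq_nonneg (B (k + 1) + B k)]
  have hshift : ∑ k ∈ range N, B (k + 1) ^ 2 ≤ ∑ k ∈ range (N + 1), B k ^ 2 := by
    rw [sum_range_succ' (fun k => B k ^ 2)]
    exact le_add_of_nonneg_right (sq_nonneg _)
  have hextend : ∑ k ∈ range N, B k ^ 2 ≤ ∑ k ∈ range (N + 1), B k ^ 2 := by
    rw [sum_range_succ]
    exact le_add_of_nonneg_right (sq_nonneg _)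
  calc ∑ k ∈ range N, (B (k + 1) - B k) ^ 2
      ≤ ∑ k ∈ range N, (2 * B (k + 1) ^ 2 + 2 * B k ^ 2) := sum_le_sum hpoint
    _ = 2 * ∑ k ∈ range N, B (k + 1) ^ 2 + 2 * ∑ k ∈ range N, B k ^ 2 := by
        rw [sum_add_distrib, mul_sum, mul_sum]
    _ ≤ 4 * ∑ k ∈ range (N + 1), B k ^ 2 := by linarith

theorem sum_range_add_secondDiff_mul_secondDiff_nonpos (hN : a N = 0) :
    ∑ k ∈ range N, (a k + secondDiff a k / 12) * secondDiff a k ≤ 0 := by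
  set B : ℕ → ℝ := fun k => a k - a (k - 1)
  have hdiff : ∀ k, secondDiff a k = B (k + 1) - B k := by
    intro k
    simp only [B, secondDiff, Nat.add_sub_cancel]
    ring
  have hsq : ∑ k ∈ range N, secondDiff a k ^ 2 ≤ 4 * ∑ k ∈ range (N + 1), B k ^ 2 := by
    simpa only [hdiff] using sum_range_sq_sub_le N B
  have hB : 0 ≤ ∑ k ∈ range (N + 1), B k ^ 2 := sum_nonneg fun k _ => sq_nonneg _
  calc ∑ k ∈ range N, (a k + secondDiff a k / 12) * secondDiff a k
      = ∑ k ∈ range N, a k * secondDiff a k + (∑ k ∈ range N, secondDiff a k ^ 2) / 12 := by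
        rw [sum_div, ← sum_add_distrib]
        exact sum_congr rfl fun k _ => by ring
    _ ≤ 0 := by rw [sum_range_mul_secondDiff a N hN]; linarith

theorem sum_Icc_add_secondDiff_mul_secondDiff_nonpos (h0 : a 0 = 0) (hN : a N = 0) :
    ∑ k ∈ Icc 1 (N - 1), (a k + secondDiff a k / 12) * secondDiff a k ≤ 0 := by
  rcases N.eq_zero_or_pos with rfl | hpos
  · simp
  have hIcc : Icc 1 (N - 1) = Ico 1 N := by
    ext k
    simp only [mem_Icc, mem_Ico]
    omega
  have hrange := sum_range_add_secondDiff_mul_secondDiff_nonpos a N hN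
  rw [sum_range_eq_add_Ico _ hpos, h0] at hrange
  rw [hIcc]
  nlinarith [sq_nonneg (secondDiff a 0)]

end OneDimensional

theorem add_sq_div_twelve_mul_div_sq (a d h : ℝ) :
    (a + h ^ 2 / 12 * (d / h ^ 2)) * (d / h ^ 2) = (a + d / 12) * d / h ^ 2 := by
  rcases eq_or_ne h 0 with rfl | hh
  · simp
  · field_simp

theorem Hcy_dxx_comm (Mx My : ℕ) (v : GridFn) : Hcy My (dxx Mx v) = dxx Mx (Hcy My v) := by
  funext i j
  simp only [Hcy, dxx, dyy]
  split_ifs <;> ring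

theorem Hcx_dyy_comm (Mx My : ℕ) (v : GridFn) : Hcx Mx (dyy My v) = dyy My (Hcx Mx v) := by
  funext i j
  simp only [Hcx, dxx, dyy]
  split_ifs <;> ring

theorem Hcx_Hcy_comm (Mx My : ℕ) (v : GridFn) : Hcx Mx (Hcy My v) = Hcy My (Hcx Mx v) := by
  funext i j
  simp only [Hcx, Hcy, dxx, dyy]
  split_ifs <;> ring

theorem Lamh_eq (Mx My : ℕ) (v : GridFn) :
    Lamh Mx My v = dxx Mx (Hcy My v) + dyy My (Hcx Mx v) := by
  funext i j
  rw [Lamh, Hcy_dxx_comm, Hcx_dyy_comm]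
  rfl

theorem Hcy_eq_zero {My : ℕ} {v : GridFn} {i j : ℕ} (hv : ∀ j' ≤ My, v i j' = 0)
    (hj : j ≤ My) : Hcy My v i j = 0 := by
  simp only [Hcy, dyy]
  split_ifs with h
  · rw [hv j hj, hv (j + 1) (by omega), hv (j - 1) (by omega)]
    ring
  · exact hv j hj

theorem Hcx_eq_zero {Mx : ℕ} {v : GridFn} {i j : ℕ} (hv : ∀ i' ≤ Mx, v i' j = 0)
    (hi : i ≤ Mx) : Hcx Mx v i j = 0 := by
  simp only [Hcx, dxx]
  split_ifs with h
  · rw [hv i hi, hv (i + 1) (by omega), hv (i - 1) (by omega)]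
    ring
  · exact hv i hi

theorem innp_add_right (Mx My : ℕ) (u w w' : GridFn) :
    innp Mx My u (w + w') = innp Mx My u w + innp Mx My u w' := by
  simp only [innp, Pi.add_apply, mul_add, sum_add_distrib]

theorem innp_Hcx_dxx_nonpos (Mx My : ℕ) (w : GridFn) (h0 : ∀ j ≤ My, w 0 j = 0)
    (hM : ∀ j ≤ My, w Mx j = 0) : innp Mx My (Hcx Mx w) (dxx Mx w) ≤ 0 := by
  refine mul_nonpos_of_nonneg_of_nonpos (by unfold hx hy; positivity) ?_
  rw [sum_comm]
  refine sum_nonpos fun j hj => ?_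
  have hj : j ≤ My := by rw [mem_Icc] at hj; omega
  have hterm : ∀ i ∈ Icc 1 (Mx - 1), Hcx Mx w i j * dxx Mx w i j
      = (w i j + secondDiff (w · j) i / 12) * secondDiff (w · j) i / hx Mx ^ 2 := by
    intro i hi
    rw [Hcx, if_pos (mem_Icc.mp hi)]
    exact add_sq_div_twelve_mul_div_sq _ _ _
  rw [sum_congr rfl hterm, ← sum_div]
  exact div_nonpos_of_nonpos_of_nonneg
    (sum_Icc_add_secondDiff_mul_secondDiff_nonpos (w · j) Mx (h0 j hj) (hM j hj)) (sq_nonneg _)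

theorem innp_Hcy_dyy_nonpos (Mx My : ℕ) (w : GridFn) (h0 : ∀ i ≤ Mx, w i 0 = 0)
    (hM : ∀ i ≤ Mx, w i My = 0) : innp Mx My (Hcy My w) (dyy My w) ≤ 0 := by
  refine mul_nonpos_of_nonneg_of_nonpos (by unfold hx hy; positivity) ?_
  refine sum_nonpos fun i hi => ?_
  have hi : i ≤ Mx := by rw [mem_Icc] at hi; omega
  have hterm : ∀ j ∈ Icc 1 (My - 1), Hcy My w i j * dyy My w i j
      = (w i j + secondDiff (w i ·) j / 12) * secondDiff (w i ·) j / hy My ^ 2 := by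
    intro j hj
    rw [Hcy, if_pos (mem_Icc.mp hj)]
    exact add_sq_div_twelve_mul_div_sq _ _ _
  rw [sum_congr rfl hterm, ← sum_div]
  exact div_nonpos_of_nonpos_of_nonneg
    (sum_Icc_add_secondDiff_mul_secondDiff_nonpos (w i ·) My (h0 i hi) (hM i hi)) (sq_nonneg _)

theorem stmt8_general (Mx My : ℕ) (v : GridFn)
    (hv : BZero Mx My v) :
    innp Mx My (Hch Mx My v) (Lamh Mx My v) ≤ 0 := by
  have hx_term : innp Mx My (Hch Mx My v) (dxx Mx (Hcy My v)) ≤ 0 :=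
    innp_Hcx_dxx_nonpos Mx My _
      (fun j hj => Hcy_eq_zero (fun j' hj' => hv 0 (Nat.zero_le _) j' hj' (by simp)) hj)
      (fun j hj => Hcy_eq_zero (fun j' hj' => hv Mx le_rfl j' hj' (by simp)) hj)
  have hy_term : innp Mx My (Hch Mx My v) (dyy My (Hcx Mx v)) ≤ 0 := by
    rw [Hch, Hcx_Hcy_comm]
    exact innp_Hcy_dyy_nonpos Mx My _
      (fun i hi => Hcx_eq_zero (fun i' hi' => hv i' hi' 0 (Nat.zero_le _) (by simp)) hi)
      (fun i hi => Hcx_eq_zero (fun i' hi' => hv i' hi' My le_rfl (by simp)) hi)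
  rw [Lamh_eq, innp_add_right]
  exact add_nonpos hx_term hy_term

/-- For any `v ∈ V_h^0`, `(H_h v, Λ_h v) ≤ 0`. -/
theorem stmt8 (Mx My : ℕ) (hMx : 2 ≤ Mx) (hMy : 2 ≤ My) (v : GridFn)
    (hv : BZero Mx My v) :
    innp Mx My (Hch Mx My v) (Lamh Mx My v) ≤ 0 :=
  stmt8_general Mx My v hv
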